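/- arXiv:2201.07529 — 2 statements merged into one kernel-verified Lean document; each statement's English description precedes it below -/
import Mathlib

section
/- With s₂ and s₁ defined by s₂: (ν₃ ↦ κ₁/ν₇, ν₇ ↦ κ₁/ν₃, κ₂ ↦ κ₁κ₂/(ν₃ν₇), g ↦ g(f−ν₃)/(f−κ₁/ν₇)) and s₁: ν₃ ↔ ν₄, the braid relation s₁s₂s₁ = s₂s₁s₂ holds on the parameter tuple (wherever all expressions are defined). -/
/-- Parameter tuple (q, κ₁, κ₂, ν₁, …, ν₈, f, g). -/
structure QP (F : Type*) where
  q : F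
  k1 : F
  k2 : F
  n1 : F
  n2 : F
  n3 : F
  n4 : F
  n5 : F
  n6 : F
  n7 : F
  n8 : F
  f : F
  g : F

variable {F : Type*} [Field F]

/-- All parameters are nonzero. -/
def QP.Nz (p : QP F) : Prop :=
  p.q ≠ 0 ∧ p.k1 ≠ 0 ∧ p.k2 ≠ 0 ∧ p.n1 ≠ 0 ∧ p.n2 ≠ 0 ∧ p.n3 ≠ 0 ∧ p.n4 ≠ 0 ∧
  p.n5 ≠ 0 ∧ p.n6 ≠ 0 ∧ p.n7 ≠ 0 ∧ p.n8 ≠ 0 ∧ p.f ≠ 0 ∧ p.g ≠ 0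

/-- s₀ : ν₇ ↔ ν₈ -/
def s0 (p : QP F) : QP F := { p with n7 := p.n8, n8 := p.n7 }

/-- s₁ : ν₃ ↔ ν₄ -/
def s1 (p : QP F) : QP F := { p with n3 := p.n4, n4 := p.n3 }

/-- s₄ : ν₁ ↔ ν₂ -/
def s4 (p : QP F) : QP F := { p with n1 := p.n2, n2 := p.n1 }

/-- s₅ : ν₅ ↔ ν₆ -/
def s5 (p : QP F) : QP F := { p with n5 := p.n6, n6 := p.n5 }

/-- s₂ : ν₃ ↦ κ₁/ν₇, ν₇ ↦ κ₁/ν₃, κ₂ ↦ κ₁κ₂/(ν₃ν₇), g ↦ g(f−ν₃)/(f−κ₁/ν₇) -/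
def s2 (p : QP F) : QP F :=
  { p with n3 := p.k1 / p.n7, n7 := p.k1 / p.n3, k2 := p.k1 * p.k2 / (p.n3 * p.n7),
           g := p.g * (p.f - p.n3) / (p.f - p.k1 / p.n7) }

/-- s₃ : ν₁ ↦ κ₂/ν₅, ν₅ ↦ κ₂/ν₁, κ₁ ↦ κ₁κ₂/(ν₁ν₅), f ↦ f(g−1/ν₁)/(g−ν₅/κ₂) -/
def s3 (p : QP F) : QP F :=
  { p with n1 := p.k2 / p.n5, n5 := p.k2 / p.n1, k1 := p.k1 * p.k2 / (p.n1 * p.n5),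
           f := p.f * (p.g - 1 / p.n1) / (p.g - p.n5 / p.k2) }

/-- π₁ -/
def pi1 (p : QP F) : QP F :=
  { q := 1 / p.q, k1 := 1 / p.k1, k2 := 1 / p.k2,
    n1 := 1 / p.n1, n2 := 1 / p.n2, n3 := 1 / p.n7, n4 := 1 / p.n8,
    n5 := 1 / p.n5, n6 := 1 / p.n6, n7 := 1 / p.n3, n8 := 1 / p.n4,
    f := p.f / p.k1, g := 1 / p.g }

/-- π₂ -/
def pi2 (p : QP F) : QP F :=
  { q := 1 / p.q, k1 := 1 / p.k2, k2 := 1 / p.k1,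
    n1 := 1 / p.n7, n2 := 1 / p.n8, n3 := 1 / p.n5, n4 := 1 / p.n6,
    n5 := 1 / p.n3, n6 := 1 / p.n4, n7 := 1 / p.n1, n8 := 1 / p.n2,
    f := 1 / (p.k2 * p.g), g := p.k1 / p.f }

/-- s = π₂π₁s₂s₁s₀s₂ (rightmost applied first). -/
def sD5 (p : QP F) : QP F := pi2 (pi1 (s2 (s1 (s0 (s2 p)))))

/-- The adjustment Ξ of Theorem 2.1. -/
def Xi (p : QP F) : QP F :=
  { q := p.q,
    n1 := p.n1 * p.n5 * p.n6 / p.k2, n2 := p.n2 * p.n5 * p.n6 / p.k2,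
    n3 := p.k1 / (p.q * p.n4), n4 := p.k1 / (p.q * p.n3),
    n5 := p.n5 * p.n1 * p.n2 / p.k2, n6 := p.n6 * p.n1 * p.n2 / p.k2,
    n7 := p.k1 / (p.q * p.n8), n8 := p.k1 / (p.q * p.n7),
    k1 := p.k1 ^ 3 / (p.q ^ 2 * p.n3 * p.n4 * p.n7 * p.n8),
    k2 := p.n1 * p.n2 * p.n5 * p.n6 / p.k2,
    f := p.f * p.k1 / (p.q * p.n3 * p.n4),
    g := p.g * p.k2 / (p.n5 * p.n6) }

/-- T = Ξ ∘ s². -/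
def TD5 (p : QP F) : QP F := Xi (sD5 (sD5 p))

def s2AtN4 (p : QP F) : QP F :=
  { p with n4 := p.k1 / p.n7, n7 := p.k1 / p.n4, k2 := p.k1 * p.k2 / (p.n4 * p.n7),
           g := p.g * (p.f - p.n4) / (p.f - p.k1 / p.n7) }

theorem s1_s2_s1 (p : QP F) : s1 (s2 (s1 p)) = s2AtN4 p := rfl

theorem mul_div_mul_div_cancel_right {a b c d : F} (hb : b ≠ 0) :
    a * b / c * d / b = a * d / c := by
  field_simp

/- On the right the second s₂ sends ν₃ back to κ₁/(κ₁/ν₃) = ν₃, and the factor f − ν₃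
of the two g-multipliers cancels. -/
theorem s2_s1_s2 (p : QP F) (hk1 : p.k1 ≠ 0) (hn3 : p.n3 ≠ 0) (hf3 : p.f - p.n3 ≠ 0) :
    s2 (s1 (s2 p)) = s2AtN4 p := by
  have hk2 : p.k1 * (p.k1 * p.k2 / (p.n3 * p.n7)) / (p.n4 * (p.k1 / p.n3)) =
      p.k1 * p.k2 / (p.n4 * p.n7) := by
    field_simp
  simp only [s1, s2, s2AtN4, div_div_cancel₀ hk1, hk2, mul_div_mul_div_cancel_right hf3]

theorem stmt3_general (p : QP F) (hnz : p.Nz)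
    (hd1 : p.f - p.n3 ≠ 0) :
    s1 (s2 (s1 p)) = s2 (s1 (s2 p)) := by
  obtain ⟨-, hk1, -, -, -, hn3, -⟩ := hnz
  rw [s1_s2_s1, s2_s1_s2 p hk1 hn3 hd1]

theorem stmt3 (p : QP F) (hnz : p.Nz)
    (hd1 : p.f - p.n3 ≠ 0) (hd2 : p.f - p.n4 ≠ 0) (hd3 : p.f - p.k1 / p.n7 ≠ 0) :
    s1 (s2 (s1 p)) = s2 (s1 (s2 p)) :=
  stmt3_general p hnz hd1
end

section
/- Let π₁ act by q↦1/q, ν₁↦1/ν₁, ν₂↦1/ν₂, ν₃↦1/ν₇, ν₄↦1/ν₈, ν₅↦1/ν₅, ν₆↦1/ν₆, ν₇↦1/ν₃, ν₈↦1/ν₄, κ₁↦1/κ₁, κ₂↦1/κ₂, f↦f/κ₁, g↦1/g. Then π₁² = id and, with π₂ as above, (π₁π₂)⁴ = id on the parameter tuple. -/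
variable {F : Type*} [Field F]

theorem stmt5 (p : QP F) (hnz : p.Nz) :
    pi1 (pi1 p) = p ∧
    pi1 (pi2 (pi1 (pi2 (pi1 (pi2 (pi1 (pi2 p))))))) = p := by
  obtain ⟨hq, hk1, hk2, h1, h2, h3, h4, h5, h6, h7, h8, hf, hg⟩ := hnz
  constructor <;> (simp only [pi1, pi2]; cases p; congr 1 <;> field_simp)
end
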